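/- Let F be a k-rowed (0,1)-matrix and let ℓ ≥ 0 be an integer such that there is a constant c > 0 with forb(m, F) ≤ c·m^ℓ for all m ≥ 1. Let G be the (k+2)-rowed (0,1)-matrix obtained from F by adding a row of all 1's and a row of all 0's (i.e., G = [1;0] × F, where [1;0] is the 2×1 column with a 1 above a 0). Then there is a constant c' > 0 such that forb(m, G) ≤ c'·m^{ℓ+1} for all m ≥ 1. -/
import Mathlib


/-- `F` is a configuration in `A`: some row and column permutation of `F`
is a submatrix of `A`. -/
def IsConfig {k n m p : ℕ} (F : Matrix (Fin k) (Fin n) Bool)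
    (A : Matrix (Fin m) (Fin p) Bool) : Prop :=
  ∃ (r : Fin k → Fin m) (c : Fin n → Fin p),
    Function.Injective r ∧ Function.Injective c ∧ ∀ i j, A (r i) (c j) = F i j

/-- A (0,1)-matrix is simple if no two of its columns are equal. -/
def Simple {m p : ℕ} (A : Matrix (Fin m) (Fin p) Bool) : Prop :=
  Function.Injective fun j i => A i j

/-- A (0,1)-matrix is `t`-simple if every column occurs with multiplicity at most `t`. -/
def TSimple {m p : ℕ} (t : ℕ) (A : Matrix (Fin m) (Fin p) Bool) : Prop :=
  ∀ j : Fin p, (Finset.univ.filter fun j' : Fin p => ∀ i, A i j' = A i j).card ≤ t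

/-- `forb m F`: the maximum number of columns of an `m`-rowed simple matrix
avoiding `F` as a configuration. -/
noncomputable def forb (m : ℕ) {k n : ℕ} (F : Matrix (Fin k) (Fin n) Bool) : ℕ :=
  sSup { p : ℕ | ∃ A : Matrix (Fin m) (Fin p) Bool, Simple A ∧ ¬ IsConfig F A }

/-- `t·M`: the concatenation of `t` copies of `M`. -/
def tCopies {k n : ℕ} (t : ℕ) (M : Matrix (Fin k) (Fin n) Bool) :
    Matrix (Fin k) (Fin (t * n)) Bool :=
  fun i j => M i ⟨j.val % n, Nat.mod_lt _ (by
    rcases Nat.eq_zero_or_pos n with h | h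
    · exact absurd j.isLt (by simp [h])
    · exact h)⟩

/-- `F_{a,b,c,d}`: the `(a+b+c+d) × 2` matrix with `a` rows `[1 1]`, `b` rows `[1 0]`,
`c` rows `[0 1]` and `d` rows `[0 0]`. -/
def Fabcd (a b c d : ℕ) : Matrix (Fin (a+b+c+d)) (Fin 2) Bool :=
  fun i j =>
    if i.val < a then true
    else if i.val < a + b then decide (j = 0)
    else if i.val < a + b + c then decide (j = 1)
    else false

/-- `[1;0] × F`: the matrix obtained from `F` by adding a row of all 1's (on top)
and then a row of all 0's. -/
def oneZeroProd {k n : ℕ} (F : Matrix (Fin k) (Fin n) Bool) :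
    Matrix (Fin (2 + k)) (Fin n) Bool :=
  fun i j =>
    if h : 2 ≤ i.val then F ⟨i.val - 2, by have := i.isLt; omega⟩ j
    else decide (i.val = 0)

lemma simple_card_le {m p : ℕ} (A : Matrix (Fin m) (Fin p) Bool) (hA : Simple A) :
    p ≤ 2 ^ m := by
  have := Fintype.card_le_of_injective _ hA
  simpa using this

lemma le_forb {m k n p : ℕ} (F : Matrix (Fin k) (Fin n) Bool)
    (A : Matrix (Fin m) (Fin p) Bool) (hA : Simple A) (h : ¬ IsConfig F A) :
    p ≤ forb m F := by
  have hb : BddAbove { q : ℕ | ∃ B : Matrix (Fin m) (Fin q) Bool, Simple B ∧ ¬ IsConfig F B } := by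
    refine ⟨2 ^ m, ?_⟩
    rintro q ⟨B, hB, -⟩
    exact simple_card_le B hB
  exact le_csSup hb ⟨A, hA, h⟩

lemma fiber_bound {k n m p : ℕ} (F : Matrix (Fin k) (Fin n) Bool)
    (A : Matrix (Fin m) (Fin p) Bool) (hA : Simple A)
    (hG : ¬ IsConfig (oneZeroProd F) A) (b : Bool) (z s : Fin m)
    (hz : z.val = 0) (hs : s.val ≠ 0)
    (fib : Finset (Fin p)) (hfib : ∀ j ∈ fib, A z j = b ∧ A s j = !b) :
    fib.card ≤ forb (m - 2) F := by
  classical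
  have hsm : s.val < m := s.isLt
  -- row embedding skipping rows z and s
  let e : Fin (m - 2) → Fin m := fun i =>
    ⟨if i.val + 1 < s.val then i.val + 1 else i.val + 2, by
      have := i.isLt; split <;> omega⟩
  have hev : ∀ i : Fin (m - 2),
      (e i).val = if i.val + 1 < s.val then i.val + 1 else i.val + 2 := fun i => rfl
  have hev' : ∀ i : Fin (m - 2),
      ((e i).val = i.val + 1 ∧ i.val + 1 < s.val) ∨
      ((e i).val = i.val + 2 ∧ s.val ≤ i.val + 1) := by
    intro i
    have h1 := hev i
    by_cases c1 : i.val + 1 < s.val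
    · left; rw [if_pos c1] at h1; exact ⟨h1, c1⟩
    · right; rw [if_neg c1] at h1; exact ⟨h1, by omega⟩
  have heinj : Function.Injective e := by
    intro i1 i2 h
    have h1 := hev' i1; have h2 := hev' i2
    rw [h] at h1
    apply Fin.ext
    rcases h1 with ⟨h1, h1'⟩ | ⟨h1, h1'⟩ <;> rcases h2 with ⟨h2, h2'⟩ | ⟨h2, h2'⟩ <;> omega
  have henz : ∀ i, (e i).val ≠ 0 ∧ (e i).val ≠ s.val := by
    intro i
    rcases hev' i with ⟨h1, h1'⟩ | ⟨h1, h1'⟩ <;> constructor <;> omega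
  have hesurj : ∀ r : Fin m, r.val ≠ 0 → r ≠ s → ∃ i, e i = r := by
    intro r hr0 hrs
    have hrs' : r.val ≠ s.val := fun h => hrs (Fin.ext h)
    have hrm := r.isLt
    have hs1 : 1 ≤ s.val := Nat.one_le_iff_ne_zero.mpr hs
    by_cases hlt : r.val < s.val
    · refine ⟨⟨r.val - 1, by omega⟩, Fin.ext ?_⟩
      rw [hev]; dsimp only; rw [if_pos (by omega)]; omega
    · refine ⟨⟨r.val - 2, by omega⟩, Fin.ext ?_⟩
      rw [hev]; dsimp only; rw [if_neg (by omega)]; omega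
  -- column enumeration of the fiber
  let g : Fin fib.card → Fin p := fun j => (fib.orderIsoOfFin rfl j : Fin p)
  have hgmem : ∀ j, g j ∈ fib := fun j => (fib.orderIsoOfFin rfl j).2
  have hginj : Function.Injective g := by
    intro j1 j2 h
    exact (fib.orderIsoOfFin rfl).injective (Subtype.ext h)
  let B : Matrix (Fin (m - 2)) (Fin fib.card) Bool := fun i j => A (e i) (g j)
  have hBsimple : Simple B := by
    intro j1 j2 h
    apply hginj
    apply hA
    funext i
    show A i (g j1) = A i (g j2)
    by_cases hi0 : i.val = 0
    · have hiz : i = z := Fin.ext (by rw [hi0, hz])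
      rw [hiz, (hfib _ (hgmem j1)).1, (hfib _ (hgmem j2)).1]
    · by_cases his : i = s
      · rw [his, (hfib _ (hgmem j1)).2, (hfib _ (hgmem j2)).2]
      · obtain ⟨i', hi'⟩ := hesurj i hi0 his
        rw [← hi']
        exact congrFun h i'
  have hzs : z ≠ s := by
    intro h; exact hs (by rw [← h, hz])
  have hBavoid : ¬ IsConfig F B := by
    rintro ⟨r₀, c₀, hr₀, hc₀, hFB⟩
    apply hG
    let r : Fin (2 + k) → Fin m := fun i =>
      if h0 : i.val = 0 then (if b then z else s)
      else if h1 : i.val = 1 then (if b then s else z)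
      else e (r₀ ⟨i.val - 2, by have := i.isLt; omega⟩)
    have hrz : ∀ i : Fin (2 + k), i.val = 0 → r i = (if b then z else s) := by
      intro i h; simp only [r]; rw [dif_pos h]
    have hr1 : ∀ i : Fin (2 + k), ¬ i.val = 0 → i.val = 1 → r i = (if b then s else z) := by
      intro i h0 h1; simp only [r]; rw [dif_neg h0, dif_pos h1]
    have hr2 : ∀ i : Fin (2 + k), ¬ i.val = 0 → ¬ i.val = 1 →
        ∃ i' : Fin k, i'.val = i.val - 2 ∧ r i = e (r₀ i') := by
      intro i h0 h1
      refine ⟨⟨i.val - 2, by have := i.isLt; omega⟩, rfl, ?_⟩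
      simp only [r]; rw [dif_neg h0, dif_neg h1]
    have hrvals : ∀ i : Fin (2 + k), i.val = 0 ∨ i.val = 1 → r i = z ∨ r i = s := by
      intro i h
      rcases h with h | h
      · rw [hrz i h]; cases b <;> simp
      · rw [hr1 i (by omega) h]; cases b <;> simp
    refine ⟨r, fun j => g (c₀ j), ?_, hginj.comp hc₀, ?_⟩
    · -- injectivity of r
      intro i1 i2 h12
      by_cases a01 : i1.val = 0 ∨ i1.val = 1 <;> by_cases b01 : i2.val = 0 ∨ i2.val = 1
      · -- both small
        rcases a01 with a | a <;> rcases b01 with b' | b'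
        · exact Fin.ext (by omega)
        · exfalso
          rw [hrz i1 a, hr1 i2 (by omega) b'] at h12
          cases b <;> simp at h12 <;> first | exact hzs h12 | exact hzs h12.symm
        · exfalso
          rw [hr1 i1 (by omega) a, hrz i2 b'] at h12
          cases b <;> simp at h12 <;> first | exact hzs h12 | exact hzs h12.symm
        · exact Fin.ext (by omega)
      · exfalso
        obtain ⟨i', -, hi'⟩ := hr2 i2 (by omega) (by omega)
        have hv := henz (r₀ i')
        rcases hrvals i1 a01 with h | h <;> rw [h, hi'] at h12
        · exact hv.1 (by rw [← h12, hz])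
        · exact hv.2 (by rw [← h12])
      · exfalso
        obtain ⟨i', -, hi'⟩ := hr2 i1 (by omega) (by omega)
        have hv := henz (r₀ i')
        rcases hrvals i2 b01 with h | h <;> rw [h, hi'] at h12
        · exact hv.1 (by rw [h12, hz])
        · exact hv.2 (by rw [h12])
      · obtain ⟨i1', hv1, hi1'⟩ := hr2 i1 (by omega) (by omega)
        obtain ⟨i2', hv2, hi2'⟩ := hr2 i2 (by omega) (by omega)
        rw [hi1', hi2'] at h12
        have := hr₀ (heinj h12)
        have : i1'.val = i2'.val := by rw [this]
        have hi1b := i1.isLt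
        apply Fin.ext
        omega
    · -- entries
      intro i j
      have hfj := hfib _ (hgmem (c₀ j))
      by_cases h0 : i.val = 0
      · rw [hrz i h0]
        have hR : oneZeroProd F i j = true := by
          simp [oneZeroProd, h0]
        rw [hR]
        cases b
        · simpa using hfj.2
        · simpa using hfj.1
      · by_cases h1 : i.val = 1
        · rw [hr1 i h0 h1]
          have hR : oneZeroProd F i j = false := by
            simp [oneZeroProd, h1]
          rw [hR]
          cases b
          · simpa using hfj.1
          · simpa using hfj.2
        · obtain ⟨i', hval, heq⟩ := hr2 i h0 h1
          rw [heq]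
          have hBe : A (e (r₀ i')) (g (c₀ j)) = B (r₀ i') (c₀ j) := rfl
          rw [hBe, hFB]
          simp only [oneZeroProd]
          rw [dif_pos (show 2 ≤ i.val by omega)]
          congr 1
          exact Fin.ext (by rw [hval])
  exact le_forb F B hBsimple hBavoid

/-- the type of a column: its value at row `z` and the first row where it differs
from row `z` (or `z` itself if it is a constant column). -/
noncomputable def colType {m p : ℕ} (A : Matrix (Fin m) (Fin p) Bool) (z : Fin m)
    (j : Fin p) : Bool × Fin m :=
  (A z j, if h : (Finset.univ.filter (fun i => A i j ≠ A z j)).Nonempty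
          then (Finset.univ.filter (fun i => A i j ≠ A z j)).min' h else z)

lemma core {k n m p : ℕ} (F : Matrix (Fin k) (Fin n) Bool) (hm : 1 ≤ m)
    (A : Matrix (Fin m) (Fin p) Bool) (hA : Simple A)
    (hG : ¬ IsConfig (oneZeroProd F) A) :
    p ≤ 2 + 2 * (m - 1) * forb (m - 2) F := by
  classical
  have hm0 : 0 < m := hm
  set z : Fin m := ⟨0, hm0⟩ with hzdef
  have hcard : p = ∑ v : Bool × Fin m,
      (Finset.univ.filter (fun j => colType A z j = v)).card := by
    have h := Finset.card_eq_sum_card_fiberwise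
      (s := (Finset.univ : Finset (Fin p))) (t := Finset.univ)
      (f := colType A z) (fun j _ => Finset.mem_univ _)
    rw [Finset.card_univ, Fintype.card_fin] at h
    exact h
  have key : ∀ v : Bool × Fin m,
      (Finset.univ.filter (fun j => colType A z j = v)).card ≤
        if v.2 = z then 1 else forb (m - 2) F := by
    rintro ⟨b, s⟩
    by_cases hsz : s = z
    · subst hsz
      simp only [if_pos rfl]
      apply Finset.card_le_one.mpr
      have hconst : ∀ j : Fin p, colType A z j = (b, z) → ∀ i, A i j = A z j := by
        intro j hj i
        rw [Prod.ext_iff] at hj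
        obtain ⟨h1, h2⟩ := hj
        simp only [colType] at h1 h2
        by_contra hne
        have hnonempty : (Finset.univ.filter (fun i => A i j ≠ A z j)).Nonempty :=
          ⟨i, by simp [hne]⟩
        rw [dif_pos hnonempty] at h2
        have hmem := Finset.min'_mem _ hnonempty
        rw [h2] at hmem
        simp only [Finset.mem_filter] at hmem
        exact hmem.2 rfl
      intro j1 h1 j2 h2
      simp only [Finset.mem_filter] at h1 h2
      apply hA
      funext i
      show A i j1 = A i j2
      rw [hconst j1 h1.2 i, hconst j2 h2.2 i]
      have e1 : A z j1 = b := congrArg Prod.fst h1.2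
      have e2 : A z j2 = b := congrArg Prod.fst h2.2
      rw [e1, e2]
    · simp only [if_neg hsz]
      apply fiber_bound F A hA hG b z s rfl
        (fun h => hsz (Fin.ext (by rw [h])))
      intro j hj
      simp only [Finset.mem_filter] at hj
      have hΦ := hj.2
      rw [Prod.ext_iff] at hΦ
      obtain ⟨h1, h2⟩ := hΦ
      simp only [colType] at h1 h2
      refine ⟨h1, ?_⟩
      by_cases hne : (Finset.univ.filter (fun i => A i j ≠ A z j)).Nonempty
      · rw [dif_pos hne] at h2
        have hmem := Finset.min'_mem _ hne
        rw [h2] at hmem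
        simp only [Finset.mem_filter] at hmem
        have := hmem.2
        rw [h1] at this
        cases hb : A s j <;> cases b <;> simp_all
      · rw [dif_neg hne] at h2
        exact absurd h2.symm hsz
  have hsum : ∑ v : Bool × Fin m,
      (if v.2 = z then 1 else forb (m - 2) F) = 2 + 2 * (m - 1) * forb (m - 2) F := by
    rw [Fintype.sum_prod_type]
    have inner : (∑ s : Fin m, if s = z then 1 else forb (m - 2) F)
        = 1 + (m - 1) * forb (m - 2) F := by
      rw [← Finset.sum_erase_add _ _ (Finset.mem_univ z)]
      have h1 : ∀ x ∈ Finset.univ.erase z,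
          (if x = z then 1 else forb (m - 2) F) = forb (m - 2) F :=
        fun x hx => if_neg (Finset.ne_of_mem_erase hx)
      rw [Finset.sum_congr rfl h1, Finset.sum_const, if_pos rfl]
      simp [Finset.card_erase_of_mem (Finset.mem_univ z), Finset.card_univ,
        mul_comm, Nat.add_comm]
    simp only [inner]
    simp [Finset.sum_const, Finset.card_univ]
    ring
  calc p = ∑ v : Bool × Fin m,
      (Finset.univ.filter (fun j => colType A z j = v)).card := hcard
    _ ≤ ∑ v : Bool × Fin m, (if v.2 = z then 1 else forb (m - 2) F) :=
        Finset.sum_le_sum (fun v _ => key v)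
    _ = 2 + 2 * (m - 1) * forb (m - 2) F := hsum

lemma forb_le {m k n : ℕ} (F : Matrix (Fin k) (Fin n) Bool) (B : ℕ)
    (h : ∀ p (A : Matrix (Fin m) (Fin p) Bool), Simple A → ¬ IsConfig F A → p ≤ B) :
    forb m F ≤ B := by
  apply csSup_le'
  rintro q ⟨A, hA, hc⟩
  exact h q A hA hc


/-- **Lemma 3.6.** If `forb(m, F) = O(m^ℓ)` then `forb(m, [1;0] × F) = O(m^{ℓ+1})`. -/
theorem stmt_10 {k n : ℕ} (F : Matrix (Fin k) (Fin n) Bool)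
    (ℓ : ℕ) (c : ℝ) (hc : 0 < c)
    (hbound : ∀ m : ℕ, 1 ≤ m → (forb m F : ℝ) ≤ c * (m : ℝ) ^ ℓ) :
    ∃ c' : ℝ, 0 < c' ∧ ∀ m : ℕ, 1 ≤ m →
      (forb m (oneZeroProd F) : ℝ) ≤ c' * (m : ℝ) ^ (ℓ + 1) := by
  refine ⟨2 * c + 4, by linarith, fun m hm => ?_⟩
  have hforbG : forb m (oneZeroProd F) ≤ 2 + 2 * (m - 1) * forb (m - 2) F :=
    forb_le _ _ (fun p A hA hc' => core F hm A hA hc')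
  have hm1 : (1 : ℝ) ≤ (m : ℝ) := by exact_mod_cast hm
  have hpow1 : (1 : ℝ) ≤ (m : ℝ) ^ (ℓ + 1) := one_le_pow₀ hm1
  rcases lt_or_ge m 3 with h3 | h3
  · -- m = 1 or 2 : trivial bound 2^m ≤ 4
    have h2 : forb m (oneZeroProd F) ≤ 4 := by
      have : forb m (oneZeroProd F) ≤ 2 ^ m :=
        forb_le _ _ (fun p A hA _ => simple_card_le A hA)
      have : (2:ℕ) ^ m ≤ 4 := by
        interval_cases m <;> norm_num
      omega
    have : (forb m (oneZeroProd F) : ℝ) ≤ 4 := by exact_mod_cast h2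
    nlinarith
  · -- m ≥ 3
    have hF : (forb (m - 2) F : ℝ) ≤ c * (m : ℝ) ^ ℓ := by
      have h1 : (1:ℕ) ≤ m - 2 := by omega
      have := hbound (m - 2) h1
      refine this.trans ?_
      have hle : ((m - 2 : ℕ) : ℝ) ≤ (m : ℝ) := by
        exact_mod_cast Nat.sub_le m 2
      have : ((m - 2 : ℕ) : ℝ) ^ ℓ ≤ (m : ℝ) ^ ℓ :=
        pow_le_pow_left₀ (by positivity) hle _
      nlinarith
    have hcast : (forb m (oneZeroProd F) : ℝ) ≤
        2 + 2 * (m : ℝ) * (forb (m - 2) F : ℝ) := by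
      have : (forb m (oneZeroProd F) : ℝ) ≤ 2 + 2 * ((m - 1 : ℕ) : ℝ) * (forb (m - 2) F : ℝ) := by
        exact_mod_cast hforbG
      have hle : ((m - 1 : ℕ) : ℝ) ≤ (m : ℝ) := by exact_mod_cast Nat.sub_le m 1
      nlinarith [Nat.cast_nonneg (α := ℝ) (forb (m - 2) F)]
    have hpow : (m : ℝ) ^ (ℓ + 1) = (m : ℝ) ^ ℓ * m := pow_succ _ _
    have hmpos : (0:ℝ) < m := by linarith
    have hpl : (0:ℝ) ≤ (m:ℝ) ^ ℓ := by positivity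
    calc (forb m (oneZeroProd F) : ℝ) ≤ 2 + 2 * (m : ℝ) * (forb (m - 2) F : ℝ) := hcast
      _ ≤ 2 + 2 * (m : ℝ) * (c * (m : ℝ) ^ ℓ) := by nlinarith
      _ ≤ (2 * c + 4) * (m : ℝ) ^ (ℓ + 1) := by rw [hpow]; nlinarith
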